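/- arXiv:1107.5782 — 3 statements merged into one kernel-verified Lean document; each statement's English description precedes it below -/
import Mathlib

section
/- Let p be a prime, N ≥ 1, ξ = exp(2πi/p), and let ψ be a ℤ/pℤ-linear automorphism of (ℤ/pℤ)^N. Let S be a commutative subgroup of ℰ = { ξ^k E_{v,w} } containing the center 𝒵 = { ξ^k I }, with #S = p^{r+1}. Then the set C = { (v, ψ^{−1}(w)) : E_{v,w} ∈ S } is a ℤ/pℤ-linear subspace of (ℤ/pℤ)^{2N} with #C = p^r, and C is self-orthogonal with respect to the bilinear form ((v,w),(v',w')) ↦ ⟨v, ψ(w')⟩ − ⟨v', ψ(w)⟩, i.e. ⟨v, ψ(w')⟩ − ⟨v', ψ(w)⟩ = 0 for all (v,w), (v',w') ∈ C. -/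
open Matrix Complex

/-- `ξ = exp(2πi/p)`. -/
noncomputable def xi (p : ℕ) : ℂ := Complex.exp (2 * Real.pi * Complex.I / p)

/-- The cyclic shift matrix `T`, with `T_{i,j} = 1` iff `j = i + 1` in `ℤ/pℤ`. -/
def Tmat (p : ℕ) : Matrix (ZMod p) (ZMod p) ℂ :=
  Matrix.of fun i j => if j = i + 1 then 1 else 0

/-- The diagonal matrix `R = diag(1, ξ, ξ², …, ξ^{p-1})`. -/
noncomputable def Rmat (p : ℕ) : Matrix (ZMod p) (ZMod p) ℂ :=
  Matrix.diagonal fun i => xi p ^ i.val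

/-- `E_{v,w} = (T^{v_1} R^{w_1}) ⊗ ⋯ ⊗ (T^{v_N} R^{w_N})`, the iterated Kronecker product,
realized as a matrix indexed by `(ℤ/pℤ)^N`. -/
noncomputable def Emat (p N : ℕ) [NeZero p] (v w : Fin N → ZMod p) :
    Matrix (Fin N → ZMod p) (Fin N → ZMod p) ℂ :=
  Matrix.of fun x y => ∏ i, (Tmat p ^ (v i).val * Rmat p ^ (w i).val) (x i) (y i)

/-- The pairing `⟨v,w⟩ = Σ_i v_i w_i ∈ ℤ/pℤ`. -/
def inn (p N : ℕ) (v w : Fin N → ZMod p) : ZMod p := ∑ i, v i * w i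

/-- The set `ℰ = { ξ^k E_{v,w} }` of matrices. -/
noncomputable def ESet (p N : ℕ) [NeZero p] :
    Set (Matrix (Fin N → ZMod p) (Fin N → ZMod p) ℂ) :=
  {A | ∃ (k : ZMod p) (v w : Fin N → ZMod p), A = xi p ^ k.val • Emat p N v w}

/-- The set `𝒵 = { ξ^k · I }` of scalar matrices. -/
noncomputable def ZSet (p N : ℕ) :
    Set (Matrix (Fin N → ZMod p) (Fin N → ZMod p) ℂ) :=
  {A | ∃ k : ZMod p,
    A = xi p ^ k.val • (1 : Matrix (Fin N → ZMod p) (Fin N → ZMod p) ℂ)}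

section Aux

noncomputable def fz (p : ℕ) (k : ZMod p) : ℂ := xi p ^ k.val

variable {p : ℕ} [NeZero p]

lemma xi_prim : IsPrimitiveRoot (xi p) p :=
  Complex.isPrimitiveRoot_exp p (NeZero.ne p)

lemma xi_pow_p : xi p ^ p = 1 := xi_prim.pow_eq_one

lemma xi_pow_mod (m : ℕ) : xi p ^ m = xi p ^ (m % p) := by
  conv_lhs => rw [← Nat.mod_add_div m p]
  rw [pow_add, pow_mul, xi_pow_p, one_pow, mul_one]

lemma fz_add (a b : ZMod p) : fz p (a + b) = fz p a * fz p b := by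
  rw [fz, fz, fz, ← pow_add, ZMod.val_add, ← xi_pow_mod]

lemma fz_zero : fz p 0 = 1 := by simp [fz]

lemma fz_ne_zero (a : ZMod p) : fz p a ≠ 0 :=
  pow_ne_zero _ (Complex.exp_ne_zero _)

lemma fz_inj : Function.Injective (fz p) := by
  intro a b h
  have := xi_prim.pow_inj a.val_lt b.val_lt h
  exact ZMod.val_injective p this

lemma fz_sum {ι : Type*} (s : Finset ι) (g : ι → ZMod p) :
    fz p (∑ i ∈ s, g i) = ∏ i ∈ s, fz p (g i) := by
  classical
  induction s using Finset.cons_induction with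
  | empty => simp [fz_zero]
  | cons a s ha ih => rw [Finset.sum_cons, Finset.prod_cons, fz_add, ih]

lemma Tpow_apply (a : ℕ) (i j : ZMod p) :
    (Tmat p ^ a) i j = if j = i + (a : ZMod p) then 1 else 0 := by
  induction a generalizing j with
  | zero => simp [Matrix.one_apply, eq_comm]
  | succ a ih =>
    rw [pow_succ, Matrix.mul_apply]
    have : ∀ k : ZMod p, (Tmat p ^ a) i k * Tmat p k j
        = if k = j - 1 then (Tmat p ^ a) i k else 0 := by
      intro k
      simp only [Tmat, Matrix.of_apply]
      by_cases h : j = k + 1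
      · simp [h, eq_sub_iff_add_eq]
      · rw [if_neg h, mul_zero, if_neg]
        intro hk; exact h (by rw [hk]; ring)
    simp only [this, Finset.sum_ite_eq', Finset.mem_univ, if_pos]
    rw [ih]
    congr 1
    · simp only [eq_iff_iff, sub_eq_iff_eq_add]
      push_cast
      constructor <;> intro h <;> [skip; skip] <;> rw [h] <;> ring

lemma TR_apply (a b : ℕ) (i j : ZMod p) :
    (Tmat p ^ a * Rmat p ^ b) i j
      = (if j = i + (a : ZMod p) then 1 else 0) * xi p ^ (j.val * b) := by
  rw [Rmat, Matrix.diagonal_pow, Matrix.mul_diagonal, Tpow_apply, Pi.pow_apply, ← pow_mul]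

lemma Emat_apply (N : ℕ) (v w x y : Fin N → ZMod p) :
    Emat p N v w x y = (if y = x + v then 1 else 0) * fz p (inn p N w y) := by
  have h1 : ∀ i, (Tmat p ^ (v i).val * Rmat p ^ (w i).val) (x i) (y i)
      = (if y i = x i + v i then 1 else 0) * fz p (w i * y i) := by
    intro i
    rw [TR_apply]
    congr 1
    · simp [ZMod.natCast_val, ZMod.cast_id]
    · rw [fz, ZMod.val_mul, ← xi_pow_mod, mul_comm]
  rw [Emat, Matrix.of_apply]
  simp only [h1]
  rw [Finset.prod_mul_distrib, Finset.prod_boole, inn, fz_sum]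
  congr 1
  simp [funext_iff]

lemma inn_add_left (N : ℕ) (a b c : Fin N → ZMod p) :
    inn p N (a + b) c = inn p N a c + inn p N b c := by
  simp [inn, add_mul, Finset.sum_add_distrib]

lemma inn_add_right (N : ℕ) (a b c : Fin N → ZMod p) :
    inn p N a (b + c) = inn p N a b + inn p N a c := by
  simp [inn, mul_add, Finset.sum_add_distrib]

lemma inn_comm (N : ℕ) (a b : Fin N → ZMod p) : inn p N a b = inn p N b a := by
  simp [inn, mul_comm]

lemma inn_zero_right (N : ℕ) (a : Fin N → ZMod p) : inn p N a 0 = 0 := by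
  simp [inn]

lemma Emat_mul (N : ℕ) (v w v' w' : Fin N → ZMod p) :
    Emat p N v w * Emat p N v' w'
      = fz p (-(inn p N w v')) • Emat p N (v + v') (w + w') := by
  ext x z
  rw [Matrix.mul_apply, Matrix.smul_apply]
  have h1 : ∀ y, Emat p N v w x y * Emat p N v' w' y z
      = if y = x + v then fz p (inn p N w y) *
          ((if z = y + v' then 1 else 0) * fz p (inn p N w' z)) else 0 := by
    intro y
    rw [Emat_apply, Emat_apply]
    by_cases h : y = x + v <;> simp [h, mul_assoc]
  simp only [h1, Finset.sum_ite_eq', Finset.mem_univ, if_pos]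
  rw [Emat_apply]
  by_cases h : z = x + v + v'
  · subst h
    rw [if_pos rfl, if_pos (add_assoc x v v'), one_mul, one_mul, smul_eq_mul,
        ← fz_add, ← fz_add]
    congr 1
    simp only [inn_add_left, inn_add_right]
    ring
  · have h2 : ¬ (z = x + (v + v')) := by rw [← add_assoc]; exact h
    simp [h, h2]

lemma inn_single (N : ℕ) (w : Fin N → ZMod p) (i : Fin N) :
    inn p N w (Pi.single i 1) = w i := by
  simp [inn, Pi.single_apply, mul_ite, Finset.sum_ite_eq']

lemma Emat_unique {N : ℕ} {k k' : ZMod p} {v w v' w' : Fin N → ZMod p}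
    (h : fz p k • Emat p N v w = fz p k' • Emat p N v' w') :
    k = k' ∧ v = v' ∧ w = w' := by
  have he : ∀ x y, fz p k * Emat p N v w x y = fz p k' * Emat p N v' w' x y := by
    intro x y
    have := congrFun (congrFun h x) y
    simpa using this
  have hv : v = v' := by
    by_contra hne
    have h0 := he 0 (0 + v)
    rw [Emat_apply, Emat_apply, if_pos rfl, if_neg (fun hc => hne (by
      simpa using (add_left_cancel hc.symm).symm))] at h0
    simp only [one_mul, mul_zero, zero_mul, mul_eq_zero] at h0
    rcases h0 with h0 | h0 <;> exact fz_ne_zero _ h0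
  subst hv
  have key : ∀ y : Fin N → ZMod p, k + inn p N w y = k' + inn p N w' y := by
    intro y
    have h0 := he (y - v) y
    rw [Emat_apply, Emat_apply, if_pos (by ring_nf), one_mul, one_mul] at h0
    rw [← fz_add, ← fz_add] at h0
    exact fz_inj h0
  have hk : k = k' := by
    have := key 0
    simpa [inn_zero_right] using this
  subst hk
  refine ⟨rfl, rfl, funext fun i => ?_⟩
  have := key (Pi.single i 1)
  rw [inn_single, inn_single] at this
  exact add_left_cancel this

lemma Emat_zero_zero (N : ℕ) : Emat p N (0 : Fin N → ZMod p) 0 = 1 := by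
  ext x y
  rw [Emat_apply, Matrix.one_apply]
  have : inn p N (0 : Fin N → ZMod p) y = 0 := by simp [inn]
  rw [this, fz_zero, mul_one, add_zero]
  simp [eq_comm]

end Aux

theorem stmt11 (p N r : ℕ) (hp : p.Prime) [NeZero p] (hN : 1 ≤ N)
    (ψ : (Fin N → ZMod p) ≃ₗ[ZMod p] (Fin N → ZMod p))
    (S : Set (Matrix (Fin N → ZMod p) (Fin N → ZMod p) ℂ))
    (hsub : S ⊆ ESet p N)
    (hone : (1 : Matrix (Fin N → ZMod p) (Fin N → ZMod p) ℂ) ∈ S)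
    (hmul : ∀ A ∈ S, ∀ B ∈ S, A * B ∈ S)
    (hinv : ∀ A ∈ S, ∃ B ∈ S, A * B = 1 ∧ B * A = 1)
    (hcomm : ∀ A ∈ S, ∀ B ∈ S, A * B = B * A)
    (hZS : ZSet p N ⊆ S)
    (hcard : S.ncard = p ^ (r + 1)) :
    ∃ Csub : Submodule (ZMod p) ((Fin N → ZMod p) × (Fin N → ZMod p)),
      (Csub : Set ((Fin N → ZMod p) × (Fin N → ZMod p))) =
          {x | Emat p N x.1 (ψ x.2) ∈ S} ∧
      ({x : (Fin N → ZMod p) × (Fin N → ZMod p) |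
          Emat p N x.1 (ψ x.2) ∈ S}).ncard = p ^ r ∧
      (∀ x ∈ {x : (Fin N → ZMod p) × (Fin N → ZMod p) | Emat p N x.1 (ψ x.2) ∈ S},
        ∀ y ∈ {x : (Fin N → ZMod p) × (Fin N → ZMod p) | Emat p N x.1 (ψ x.2) ∈ S},
        inn p N x.1 (ψ y.2) - inn p N y.1 (ψ x.2) = 0) := by
  classical
  set Cs : Set ((Fin N → ZMod p) × (Fin N → ZMod p)) :=
    {x | Emat p N x.1 (ψ x.2) ∈ S} with hCsdef
  -- scalar multiples stay in / come from S
  have hsmulS : ∀ (c : ZMod p), ∀ A ∈ S, fz p c • A ∈ S := by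
    intro c A hA
    have h1 : fz p c • (1 : Matrix (Fin N → ZMod p) (Fin N → ZMod p) ℂ) ∈ S :=
      hZS ⟨c, rfl⟩
    have h2 := hmul _ h1 _ hA
    rwa [smul_mul_assoc, one_mul] at h2
  have hnorm : ∀ (c : ZMod p) (E : Matrix (Fin N → ZMod p) (Fin N → ZMod p) ℂ),
      fz p c • E ∈ S → E ∈ S := by
    intro c E hE
    have h2 := hsmulS (-c) _ hE
    rwa [smul_smul, ← fz_add, neg_add_cancel, fz_zero, one_smul] at h2
  -- closure properties of Cs
  have hzero : (0 : (Fin N → ZMod p) × (Fin N → ZMod p)) ∈ Cs := by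
    show Emat p N (0 : Fin N → ZMod p) (ψ 0) ∈ S
    rw [map_zero, Emat_zero_zero]
    exact hone
  have hadd : ∀ x ∈ Cs, ∀ y ∈ Cs, x + y ∈ Cs := by
    intro x hx y hy
    have h2 := hmul _ hx _ hy
    rw [Emat_mul] at h2
    have h3 := hnorm _ _ h2
    show Emat p N (x.1 + y.1) (ψ (x.2 + y.2)) ∈ S
    rwa [map_add]
  have hnsmul : ∀ (n : ℕ), ∀ x ∈ Cs, n • x ∈ Cs := by
    intro n
    induction n with
    | zero => intro x _; simpa using hzero
    | succ n ih =>
      intro x hx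
      rw [succ_nsmul]
      exact hadd _ (ih x hx) _ hx
  have hneg : ∀ x ∈ Cs, -x ∈ Cs := by
    intro x hx
    have h2 := hnsmul (p - 1) x hx
    have h3 : (p - 1 : ℕ) • x = -x := by
      rw [← Nat.cast_smul_eq_nsmul (ZMod p)]
      have : ((p - 1 : ℕ) : ZMod p) = -1 := by
        rw [Nat.cast_sub hp.one_le, Nat.cast_one, ZMod.natCast_self, zero_sub]
      rw [this, neg_one_smul]
    rwa [h3] at h2
  -- the submodule
  let G : AddSubgroup ((Fin N → ZMod p) × (Fin N → ZMod p)) :=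
    { carrier := Cs
      add_mem' := fun ha hb => hadd _ ha _ hb
      zero_mem' := hzero
      neg_mem' := fun ha => hneg _ ha }
  refine ⟨AddSubgroup.toZModSubmodule p G, rfl, ?_, ?_⟩
  · -- cardinality
    set g : (ZMod p) × ((Fin N → ZMod p) × (Fin N → ZMod p)) →
        Matrix (Fin N → ZMod p) (Fin N → ZMod p) ℂ :=
      fun kx => fz p kx.1 • Emat p N kx.2.1 (ψ kx.2.2) with hgdef
    have hginj : Function.Injective g := by
      rintro ⟨k, x⟩ ⟨k', x'⟩ h
      obtain ⟨hk, hv, hw⟩ := Emat_unique h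
      have hx2 : x.2 = x'.2 := ψ.injective hw
      simp only [Prod.mk.injEq]
      exact ⟨hk, Prod.ext hv hx2⟩
    have hSim : S = g '' ((Set.univ : Set (ZMod p)) ×ˢ Cs) := by
      ext A
      constructor
      · intro hA
        obtain ⟨k, v, w, rfl⟩ := hsub hA
        refine ⟨(k, (v, ψ.symm w)), ⟨Set.mem_univ _, ?_⟩, ?_⟩
        · show Emat p N v (ψ (ψ.symm w)) ∈ S
          rw [LinearEquiv.apply_symm_apply]
          exact hnorm k _ hA
        · show fz p k • Emat p N v (ψ (ψ.symm w)) = _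
          rw [LinearEquiv.apply_symm_apply]
          rfl
      · rintro ⟨⟨k, x⟩, ⟨-, hx⟩, rfl⟩
        exact hsmulS k _ hx
    have hprod : ((Set.univ : Set (ZMod p)) ×ˢ Cs).ncard = p * Cs.ncard := by
      rw [← Nat.card_coe_set_eq, Nat.card_congr (Equiv.Set.prod _ _), Nat.card_prod,
        Nat.card_coe_set_eq, Nat.card_coe_set_eq, Set.ncard_univ, Nat.card_zmod]
    have hS2 : p ^ (r + 1) = p * Cs.ncard := by
      rw [← hcard, hSim, Set.ncard_image_of_injective _ hginj, hprod]
    have hps : p ^ (r + 1) = p * p ^ r := by ring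
    rw [hps] at hS2
    exact (mul_left_cancel₀ (NeZero.ne p) hS2).symm
  · -- orthogonality
    intro x hx y hy
    have hc := hcomm _ hx _ hy
    rw [Emat_mul, Emat_mul, add_comm y.1 x.1, add_comm (ψ y.2) (ψ x.2)] at hc
    obtain ⟨hk, -, -⟩ := Emat_unique hc
    have hk2 : inn p N (ψ x.2) y.1 = inn p N (ψ y.2) x.1 := neg_injective hk
    rw [inn_comm N x.1 (ψ y.2), inn_comm N y.1 (ψ x.2), hk2, sub_self]
end

section
/- Fix integers q ≥ 2 and n ≥ 1, the alphabet A = {0,1,…,q−1}, and a code C ⊆ A^n with #C ≥ 2 and minimum Hamming distance d. Let ℓ be an integer with 0 ≤ ℓ < d, let S ⊆ {1,…,n} with #S = n − ℓ, and let t : S → ℝ. Then the set Λ_C ∩ { x ∈ ℝ^n : x_i = t_i for all i ∈ S } is finite; in particular its Hausdorff dimension is 0. -/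
open scoped ENNReal

/-- The code fractal `Λ_C ⊆ [0,1]^n ⊆ ℝ^n`: points whose coordinates admit a joint
`q`-ary expansion whose digit vectors form an infinite sequence of codewords of `C`. -/
def Lambda (q n : ℕ) (C : Set (Fin n → Fin q)) : Set (EuclideanSpace ℝ (Fin n)) :=
  {x | ∃ c : ℕ → (Fin n → Fin q), (∀ j, c j ∈ C) ∧
    ∀ i : Fin n, x i = ∑' j : ℕ, (c j i : ℝ) / (q : ℝ) ^ (j + 1)}

/-!
A point of the slice has, in each coordinate `i ∈ S`, a `q`-ary expansion that is one of only
finitely many: distinct expansions of the same real differ first at some digit `n`, after which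
one of them is constantly `q - 1` and the other constantly `0`, so at most two exist. Since
`#Sᶜ ≤ ℓ < d`, distinct codewords never agree on `S`, so the `S`-digits of a codeword sequence
determine the whole sequence, and hence the point.
-/

open Filter Real

namespace Real

variable {b : ℕ}

theorem tsum_div_pow_eq_ofDigits (a : ℕ → Fin b) :
    ∑' j, (a j : ℝ) / (b : ℝ) ^ (j + 1) = ofDigits a := by
  simp only [ofDigits, ofDigitsTerm, div_eq_mul_inv]

theorem ofDigits_eq_zero_iff {a : ℕ → Fin b} : ofDigits a = 0 ↔ ∀ i, (a i : ℕ) = 0 := by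
  rw [ofDigits, ← summable_ofDigitsTerm.hasSum_iff,
    hasSum_zero_iff_of_nonneg fun _ ↦ ofDigitsTerm_nonneg, funext_iff]
  refine forall_congr' fun i ↦ ?_
  have : ((b : ℝ) ^ (i + 1))⁻¹ ≠ 0 := by
    have : 0 < b := Fin.pos (a 0)
    positivity
  simp [ofDigitsTerm, this]

theorem ofDigits_add_ofDigits_rev (hb : 1 < b) (a : ℕ → Fin b) :
    ofDigits a + ofDigits (fun i ↦ (a i).rev) = 1 := by
  rw [← ofDigits_const_last_eq_one' hb, ofDigits, ofDigits, ofDigits,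
    ← summable_ofDigitsTerm.tsum_add summable_ofDigitsTerm]
  refine tsum_congr fun i ↦ ?_
  have hdigit : (a i : ℝ) + ((a i).rev : ℕ) = ((b - 1 : ℕ) : ℝ) := by
    rw [Fin.val_rev]
    exact_mod_cast by omega
  simp only [ofDigitsTerm, ← add_mul, hdigit]

theorem ofDigits_eq_one_iff (hb : 1 < b) {a : ℕ → Fin b} :
    ofDigits a = 1 ↔ ∀ i, (a i : ℕ) = b - 1 := by
  have hsum := ofDigits_add_ofDigits_rev hb a
  have : ofDigits a = 1 ↔ ofDigits (fun i ↦ (a i).rev) = 0 := by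
    constructor <;> intro h <;> linarith
  rw [this, ofDigits_eq_zero_iff]
  refine forall_congr' fun i ↦ ?_
  have := (a i).isLt
  rw [Fin.val_rev]
  omega

theorem eventually_of_toLex_lt_of_ofDigits_eq (hb : 1 < b) {a c : ℕ → Fin b}
    (hlt : toLex a < toLex c) (h : ofDigits a = ofDigits c) :
    ∀ᶠ i in atTop, (a i : ℕ) = b - 1 ∧ (c i : ℕ) = 0 := by
  obtain ⟨n, hpre, hn⟩ : ∃ n, (∀ i < n, a i = c i) ∧ a n < c n := hlt
  set A := ofDigits fun i ↦ a (i + (n + 1))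
  set C := ofDigits fun i ↦ c (i + (n + 1))
  have hprefix :
      ∑ i ∈ Finset.range n, ofDigitsTerm a i = ∑ i ∈ Finset.range n, ofDigitsTerm c i :=
    Finset.sum_congr rfl fun i hi ↦ by simp [ofDigitsTerm, hpre i (Finset.mem_range.mp hi)]
  have hdigits : (a n : ℝ) + A = c n + C := by
    have hpos : (0 : ℝ) < ((b : ℝ) ^ (n + 1))⁻¹ := by positivity
    rw [ofDigits_eq_sum_add_ofDigits a (n + 1), ofDigits_eq_sum_add_ofDigits c (n + 1),
      Finset.sum_range_succ, Finset.sum_range_succ, hprefix] at h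
    simp only [ofDigitsTerm] at h
    exact mul_left_cancel₀ hpos.ne' (by linarith)
  have hn' : (a n : ℝ) + 1 ≤ c n := by exact_mod_cast hn
  have hA_le : A ≤ 1 := ofDigits_le_one _
  have hC_nonneg : 0 ≤ C := ofDigits_nonneg _
  have hA : A = 1 := by linarith
  have hC : C = 0 := by linarith
  rw [ofDigits_eq_one_iff hb] at hA
  rw [ofDigits_eq_zero_iff] at hC
  refine eventually_atTop.2 ⟨n + 1, fun i hi ↦ ?_⟩
  obtain ⟨k, rfl⟩ := Nat.exists_eq_add_of_le' hi
  exact ⟨hA k, hC k⟩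

theorem finite_setOf_ofDigits_eq (t : ℝ) : {a : ℕ → Fin b | ofDigits a = t}.Finite := by
  rcases le_or_gt b 1 with hb | hb
  · have : Subsingleton (Fin b) := Fin.subsingleton_iff_le_one.2 hb
    exact Set.subsingleton_of_subsingleton.finite
  have hlex : ∀ {a c : ℕ → Fin b}, toLex a < toLex c → ofDigits a = ofDigits c →
      (∀ᶠ i in atTop, (c i : ℕ) = 0) ∧ ¬∀ᶠ i in atTop, (a i : ℕ) = 0 := fun hlt h ↦
    have htail := eventually_of_toLex_lt_of_ofDigits_eq hb hlt h
    ⟨htail.mono fun _ ↦ And.right,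
      fun ha ↦ have ⟨_, ⟨hlast, _⟩, hzero⟩ := (htail.and ha).exists; by omega⟩
  -- a digit sequence is determined by its value together with whether it ends in zeros
  refine Set.Finite.of_finite_image (f := fun a ↦ ∀ᶠ i in atTop, (a i : ℕ) = 0)
    (Set.toFinite _) fun a ha c hc hac ↦ ?_
  have h : ofDigits a = ofDigits c := ha.trans hc.symm
  rcases lt_trichotomy (toLex a) (toLex c) with hlt | heq | hgt
  · exact ((hlex hlt h).2 ((iff_of_eq hac).2 (hlex hlt h).1)).elim
  · exact heq
  · exact ((hlex hgt h.symm).2 ((iff_of_eq hac).1 (hlex hgt h.symm).1)).elim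

end Real

theorem hammingDist_le_card_compl {ι : Type*} [Fintype ι] [DecidableEq ι] {β : ι → Type*}
    [∀ i, DecidableEq (β i)] {x y : ∀ i, β i} {S : Finset ι} (h : ∀ i ∈ S, x i = y i) :
    hammingDist x y ≤ Sᶜ.card :=
  Finset.card_le_card fun i hi ↦
    Finset.mem_compl.2 fun hiS ↦ (Finset.mem_filter.1 hi).2 (h i hiS)

theorem injOn_restrict_of_card_compl_lt_hammingDist {ι : Type*} [Fintype ι] [DecidableEq ι]
    {β : ι → Type*} [∀ i, DecidableEq (β i)] {C : Set (∀ i, β i)} {S : Finset ι}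
    (hC : ∀ x ∈ C, ∀ y ∈ C, x ≠ y → Sᶜ.card < hammingDist x y) :
    Set.InjOn S.restrict C := by
  intro x hx y hy hxy
  by_contra hne
  exact (hC x hx y hy hne).not_ge
    (hammingDist_le_card_compl fun i hi ↦ congrFun hxy ⟨i, hi⟩)

theorem finite_Lambda_inter_of_injOn_restrict {q n : ℕ} {C : Set (Fin n → Fin q)}
    {S : Finset (Fin n)} (hC : Set.InjOn S.restrict C) (t : S → ℝ) :
    (Lambda q n C ∩ {x | ∀ i : S, x i = t i}).Finite := by
  set E :=
    {c : ℕ → Fin n → Fin q | (∀ j, c j ∈ C) ∧ ∀ i : S, ofDigits (fun j ↦ c j i) = t i}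
  have hE : E.Finite := by
    refine Set.Finite.of_finite_image (f := fun c (i : S) j ↦ c j i) ?_ ?_
    · refine (Set.Finite.pi' fun i ↦ finite_setOf_ofDigits_eq (t i)).subset ?_
      rintro _ ⟨c, ⟨-, hc⟩, rfl⟩ i
      exact hc i
    · intro c hc c' hc' h
      funext j
      exact hC (hc.1 j) (hc'.1 j) (funext fun i ↦ congrFun (congrFun h i) j)
  refine (hE.image fun c ↦ WithLp.toLp 2 fun i ↦ ofDigits fun j ↦ c j i).subset ?_
  rintro x ⟨⟨c, hcC, hx⟩, hxt⟩
  simp only [tsum_div_pow_eq_ofDigits] at hx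
  refine ⟨c, ⟨hcC, fun i ↦ (hx i).symm.trans (hxt i)⟩, ?_⟩
  ext i
  exact (hx i).symm

theorem stmt15_general (q n : ℕ)
    (C : Set (Fin n → Fin q))
    (d : ℕ) (hd : d = sInf {k | ∃ x ∈ C, ∃ y ∈ C, x ≠ y ∧ hammingDist x y = k})
    (ℓ : ℕ) (hℓ : ℓ < d)
    (S : Finset (Fin n)) (hS : S.card = n - ℓ) (t : S → ℝ) :
    (Lambda q n C ∩ {x | ∀ i : S, x i = t i}).Finite ∧
    dimH (Lambda q n C ∩ {x | ∀ i : S, x i = t i}) = 0 := by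
  have hdist : ∀ x ∈ C, ∀ y ∈ C, x ≠ y → Sᶜ.card < hammingDist x y := by
    intro x hx y hy hxy
    have hdxy : d ≤ hammingDist x y := hd ▸ Nat.sInf_le ⟨x, hx, y, hy, hxy, rfl⟩
    rw [Finset.card_compl, Fintype.card_fin]
    omega
  have hfin := finite_Lambda_inter_of_injOn_restrict
    (injOn_restrict_of_card_compl_lt_hammingDist hdist) t
  exact ⟨hfin, hfin.dimH_zero⟩

theorem stmt15 (q n : ℕ) (hq : 2 ≤ q) (hn : 1 ≤ n)
    (C : Set (Fin n → Fin q)) (hC : 2 ≤ C.ncard)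
    (d : ℕ) (hd : d = sInf {k | ∃ x ∈ C, ∃ y ∈ C, x ≠ y ∧ hammingDist x y = k})
    (ℓ : ℕ) (hℓ : ℓ < d)
    (S : Finset (Fin n)) (hS : S.card = n - ℓ) (t : S → ℝ) :
    (Lambda q n C ∩ {x | ∀ i : S, x i = t i}).Finite ∧
    dimH (Lambda q n C ∩ {x | ∀ i : S, x i = t i}) = 0 :=
  stmt15_general q n C d hd ℓ hℓ S hS t
end

section
/- Fix integers q ≥ 2 and n ≥ 1, the alphabet A = {0,1,…,q−1}, and a code C ⊆ A^n with #C ≥ 2 and minimum Hamming distance d. Then there exist a set of coordinates S ⊆ {1,…,n} with #S = n − d and values t : S → ℝ such that the set Λ_C ∩ { x ∈ ℝ^n : x_i = t_i for all i ∈ S } has strictly positive Hausdorff dimension. -/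
/-!
Two codewords `x ≠ y` at minimal distance `d` agree on a set `S` of `n - d` coordinates. Every
sequence of codewords taking only the values `x` and `y` gives a point of `Λ_C` whose coordinates
in `S` are fixed, and projecting these points to a coordinate `i` with `x i = u ≠ v = y i`
yields the Cantor-type set of base-`q` numbers with all digits in `{u, v}`. For `q = 2` this is
`[0, 1]`. For `q ≥ 3` the binary number with the same digit pattern is a Hölder function of it
with exponent `log 2 / log q`: if the patterns first differ at place `m`, the binary numbers are
`2^(-m)`-close while the base-`q` numbers are at least `c q^(-m)` apart, since the digit gap at
place `m` cannot be compensated by the later digits. Hence the Cantor-type set has dimension at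
least `log 2 / log q`.
-/

open scoped ENNReal

open Set

namespace Real

theorem hasSum_div_pow_succ {r : ℝ} (hr : 1 < r) (c : ℝ) :
    HasSum (fun j : ℕ => c / r ^ (j + 1)) (c / (r - 1)) := by
  have hr₀ : r ≠ 0 := (one_pos.trans hr).ne'
  have hr₁ : r - 1 ≠ 0 := sub_ne_zero.2 hr.ne'
  have hterm : (fun j : ℕ => c / r ^ (j + 1)) = fun j => c / r * r⁻¹ ^ j := by
    ext j
    rw [pow_succ', inv_pow]
    field_simp
  have hsum : c / (r - 1) = c / r * (1 - r⁻¹)⁻¹ := by field_simp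
  rw [hterm, hsum]
  exact (hasSum_geometric_of_lt_one (inv_nonneg.2 (one_pos.trans hr).le)
    (inv_lt_one_of_one_lt₀ hr)).mul_left _

variable {b : ℕ}

theorem ofDigits_mem_Icc (hb : 1 < b) {x : ℕ → Fin b} {lo hi : ℝ}
    (hx : ∀ j, (x j : ℝ) ∈ Icc lo hi) : ofDigits x ∈ Icc (lo / (b - 1)) (hi / (b - 1)) := by
  have hb' : (1 : ℝ) < b := by exact_mod_cast hb
  have hsum : HasSum (ofDigitsTerm x) (ofDigits x) := summable_ofDigitsTerm.hasSum
  refine ⟨hasSum_le (fun j => ?_) (hasSum_div_pow_succ hb' lo) hsum,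
    hasSum_le (fun j => ?_) hsum (hasSum_div_pow_succ hb' hi)⟩
  · rw [ofDigitsTerm, ← div_eq_mul_inv]; gcongr; exact (hx j).1
  · rw [ofDigitsTerm, ← div_eq_mul_inv]; gcongr; exact (hx j).2

theorem abs_ofDigits_sub_ofDigits_le_of_mem_Icc (hb : 1 < b) {x y : ℕ → Fin b} {lo hi : ℝ}
    (hx : ∀ j, (x j : ℝ) ∈ Icc lo hi) (hy : ∀ j, (y j : ℝ) ∈ Icc lo hi) :
    |ofDigits x - ofDigits y| ≤ (hi - lo) / (b - 1) := by
  obtain ⟨hx₁, hx₂⟩ := ofDigits_mem_Icc hb hx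
  obtain ⟨hy₁, hy₂⟩ := ofDigits_mem_Icc hb hy
  exact sub_div hi lo _ ▸ abs_sub_le_of_le_of_le hx₁ hx₂ hy₁ hy₂

theorem le_abs_ofDigits_sub_ofDigits (hb : 1 < b) {x y : ℕ → Fin b} {lo hi : ℝ}
    (hx : ∀ j, (x j : ℝ) ∈ Icc lo hi) (hy : ∀ j, (y j : ℝ) ∈ Icc lo hi) {m : ℕ}
    (hxy : ∀ i < m, x i = y i) :
    (|(x m : ℝ) - y m| - (hi - lo) / (b - 1)) / (b : ℝ) ^ (m + 1) ≤
      |ofDigits x - ofDigits y| := by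
  set x' : ℕ → Fin b := fun i => x (i + (m + 1))
  set y' : ℕ → Fin b := fun i => y (i + (m + 1))
  have hprefix :
      ∑ i ∈ Finset.range m, ofDigitsTerm x i = ∑ i ∈ Finset.range m, ofDigitsTerm y i :=
    Finset.sum_congr rfl fun i hi => by simp only [ofDigitsTerm, hxy i (Finset.mem_range.1 hi)]
  have hdiff : ofDigits x - ofDigits y =
      ((x m : ℝ) - y m + (ofDigits x' - ofDigits y')) / (b : ℝ) ^ (m + 1) := by
    rw [ofDigits_eq_sum_add_ofDigits x (m + 1), ofDigits_eq_sum_add_ofDigits y (m + 1),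
      Finset.sum_range_succ, Finset.sum_range_succ, hprefix]
    simp only [ofDigitsTerm]
    ring
  have htail := abs_ofDigits_sub_ofDigits_le_of_mem_Icc hb (fun j => hx (j + (m + 1)))
    (fun j => hy (j + (m + 1)))
  have hb₀ : (0 : ℝ) < b := by exact_mod_cast one_pos.trans hb
  rw [hdiff, abs_div, abs_of_pos (pow_pos hb₀ _)]
  gcongr
  linarith [abs_sub_abs_le_abs_add ((x m : ℝ) - y m) (ofDigits x' - ofDigits y')]

end Real

theorem dimH_range_le_of_dist_le_mul_rpow {α X Y : Type*} [Nonempty α] [MetricSpace X]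
    [MetricSpace Y] {f : α → X} {g : α → Y} {C r : ℝ} (hC : 0 ≤ C) (hr : 0 < r)
    (h : ∀ a b, dist (g a) (g b) ≤ C * dist (f a) (f b) ^ r) :
    dimH (range g) ≤ dimH (range f) / ENNReal.ofReal r := by
  set ψ : X → Y := g ∘ Function.invFun f
  have hψ : ∀ a, ψ (f a) = g a := fun a => by
    have := h (Function.invFun f (f a)) a
    rw [Function.invFun_eq (f := f) ⟨a, rfl⟩, dist_self, Real.zero_rpow hr.ne', mul_zero]
      at this
    exact dist_le_zero.1 this
  have hholder : HolderOnWith C.toNNReal r.toNNReal ψ (range f) := by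
    rintro _ ⟨a, rfl⟩ _ ⟨b, rfl⟩
    rw [hψ, hψ, edist_dist, edist_dist, Real.coe_toNNReal _ hr.le,
      ENNReal.ofReal_rpow_of_nonneg dist_nonneg hr.le]
    change _ ≤ ENNReal.ofReal C * _
    rw [← ENNReal.ofReal_mul hC]
    exact ENNReal.ofReal_le_ofReal (h a b)
  have hrange : range g = ψ '' range f := by
    rw [← range_comp]
    exact congrArg range (funext hψ).symm
  rw [hrange]
  exact hholder.dimH_image_le (Real.toNNReal_pos.2 hr)

section TwoDigitExpansion

variable {q : ℕ}

noncomputable def twoDigitExpansion (u v : Fin q) (a : ℕ → Fin 2) : ℝ :=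
  Real.ofDigits fun j => ![u, v] (a j)

theorem range_twoDigitExpansion_swap (u v : Fin q) :
    range (twoDigitExpansion v u) = range (twoDigitExpansion u v) := by
  have hrev : Function.Surjective fun a : ℕ → Fin 2 => Fin.rev ∘ a :=
    Function.RightInverse.surjective fun a => funext fun j => Fin.rev_rev (a j)
  rw [← hrev.range_comp]
  congr 1
  ext a
  simp only [Function.comp_apply, twoDigitExpansion]
  congr 1
  ext j
  generalize a j = k
  fin_cases k <;> rfl

theorem twoDigitExpansion_zero_one : twoDigitExpansion (0 : Fin 2) 1 = Real.ofDigits := by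
  ext a
  simp only [twoDigitExpansion]
  congr 1
  ext j
  generalize a j = k
  fin_cases k <;> rfl

theorem le_abs_twoDigitExpansion_sub {u v : Fin q} (huv : u < v) {a a' : ℕ → Fin 2}
    (h : a ≠ a') :
    ((v : ℝ) - u) * (q - 2) / ((q - 1) * q) / (q : ℝ) ^ PiNat.firstDiff a a' ≤
      |twoDigitExpansion u v a - twoDigitExpansion u v a'| := by
  have hq : 1 < q := by omega
  have huv' : (u : ℝ) ≤ v := by exact_mod_cast huv.le
  have hmem : ∀ (a : ℕ → Fin 2) j, ((![u, v] (a j) : Fin q) : ℝ) ∈ Icc (u : ℝ) v := by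
    intro a j
    generalize a j = k
    fin_cases k <;> simp [huv']
  set m := PiNat.firstDiff a a'
  have hdigit : |((![u, v] (a m) : Fin q) : ℝ) - ![u, v] (a' m)| = v - u := by
    have hne : a m ≠ a' m := PiNat.apply_firstDiff_ne h
    generalize a m = k at hne
    generalize a' m = k' at hne
    fin_cases k <;> fin_cases k' <;>
      simp_all [abs_sub_comm (u : ℝ), abs_of_nonneg (sub_nonneg.2 huv')]
  have hsep := Real.le_abs_ofDigits_sub_ofDigits hq (hmem a) (hmem a') (m := m)
    fun i hi => by rw [PiNat.apply_eq_of_lt_firstDiff hi]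
  rw [hdigit] at hsep
  have hq' : (1 : ℝ) < q := by exact_mod_cast hq
  calc ((v : ℝ) - u) * (q - 2) / ((q - 1) * q) / (q : ℝ) ^ m
      = ((v - u) - (v - u) / (q - 1)) / (q : ℝ) ^ (m + 1) := by
        have : (q : ℝ) - 1 ≠ 0 := by linarith
        field_simp
        ring
    _ ≤ |twoDigitExpansion u v a - twoDigitExpansion u v a'| := hsep

theorem exists_dist_ofDigits_le_mul_dist_twoDigitExpansion_rpow (hq : 3 ≤ q) {u v : Fin q}
    (huv : u < v) : ∃ C : ℝ, 0 ≤ C ∧ ∀ a a' : ℕ → Fin 2,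
      dist (Real.ofDigits a) (Real.ofDigits a') ≤
        C * dist (twoDigitExpansion u v a) (twoDigitExpansion u v a') ^ Real.logb q 2 := by
  set c : ℝ := ((v : ℝ) - u) * (q - 2) / ((q - 1) * q)
  set s := Real.logb q 2
  have hq' : (3 : ℝ) ≤ q := by exact_mod_cast hq
  have hc : 0 < c := by
    have : (u : ℝ) < v := by exact_mod_cast huv
    exact div_pos (mul_pos (by linarith) (by linarith)) (by nlinarith)
  have hs : 0 < s := Real.logb_pos (by linarith) one_lt_two
  have hqs : (q : ℝ) ^ s = 2 := Real.rpow_logb (by linarith) (by linarith) two_pos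
  refine ⟨(c ^ s)⁻¹, by positivity, fun a a' => ?_⟩
  rcases eq_or_ne a a' with rfl | h
  · simp [Real.zero_rpow hs.ne']
  set m := PiNat.firstDiff a a'
  rw [Real.dist_eq, Real.dist_eq]
  calc |Real.ofDigits a - Real.ofDigits a'| ≤ (((2 : ℕ) : ℝ) ^ m)⁻¹ :=
        Real.abs_ofDigits_sub_ofDigits_le fun i hi => PiNat.apply_eq_of_lt_firstDiff hi
    _ = (c ^ s)⁻¹ * (c / (q : ℝ) ^ m) ^ s := by
        rw [Real.div_rpow hc.le (by positivity), ← Real.rpow_natCast (q : ℝ) m,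
          ← Real.rpow_mul (by linarith), mul_comm (m : ℝ) s, Real.rpow_mul (by linarith), hqs,
          Real.rpow_natCast, Nat.cast_ofNat]
        field_simp
    _ ≤ (c ^ s)⁻¹ * |twoDigitExpansion u v a - twoDigitExpansion u v a'| ^ s := by
        gcongr
        exact le_abs_twoDigitExpansion_sub huv h

theorem dimH_range_twoDigitExpansion_pos {u v : Fin q} (huv : u ≠ v) :
    0 < dimH (range (twoDigitExpansion u v)) := by
  wlog h : u < v generalizing u v
  · rw [← range_twoDigitExpansion_swap]
    exact this huv.symm (huv.lt_or_gt.resolve_left h)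
  have hbinary : 0 < dimH (range (Real.ofDigits : (ℕ → Fin 2) → ℝ)) := by
    have hsurj : Icc 0 1 ⊆ range (Real.ofDigits (b := 2)) := by
      rw [← image_univ]
      exact Real.ofDigits_SurjOn one_lt_two
    refine lt_of_lt_of_le ?_ (dimH_mono hsurj)
    rw [Real.dimH_of_nonempty_interior (by simp)]
    simp
  rcases (show 2 ≤ q by omega).eq_or_lt with rfl | hq
  · obtain ⟨rfl, rfl⟩ : u = 0 ∧ v = 1 := by omega
    rwa [twoDigitExpansion_zero_one]
  · obtain ⟨C, hC, hdist⟩ := exists_dist_ofDigits_le_mul_dist_twoDigitExpansion_rpow hq h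
    have hle := dimH_range_le_of_dist_le_mul_rpow hC
      (Real.logb_pos (by exact_mod_cast hq.trans' one_lt_two) one_lt_two) hdist
    refine pos_iff_ne_zero.2 fun h0 => ?_
    rw [h0, ENNReal.zero_div] at hle
    exact hbinary.not_ge hle

end TwoDigitExpansion

section Hamming

variable {ι : Type*} [Fintype ι] {β : ι → Type*} [∀ i, DecidableEq (β i)]

theorem card_filter_eq_eq_card_sub_hammingDist (x y : ∀ i, β i) :
    (Finset.univ.filter fun i => x i = y i).card = Fintype.card ι - hammingDist x y := by
  have := Finset.card_filter_add_card_filter_not (s := Finset.univ) fun i => x i = y i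
  rw [Finset.card_univ] at this
  rw [hammingDist]
  simp only [ne_eq]
  omega

theorem exists_hammingDist_eq_sInf {C : Set (∀ i, β i)} (hC : 2 ≤ C.ncard) :
    ∃ x ∈ C, ∃ y ∈ C, x ≠ y ∧
      hammingDist x y = sInf {k | ∃ x ∈ C, ∃ y ∈ C, x ≠ y ∧ hammingDist x y = k} := by
  obtain ⟨x, y, hx, hy, hxy⟩ :=
    (Set.one_lt_ncard_iff (Set.finite_of_ncard_pos (by omega))).1 hC
  exact Nat.sInf_mem (s := {k | ∃ x ∈ C, ∃ y ∈ C, x ≠ y ∧ hammingDist x y = k})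
    ⟨_, x, hx, y, hy, hxy, rfl⟩

end Hamming

section CodeFractal

variable {q n : ℕ}

noncomputable def twoWordPoint (x y : Fin n → Fin q) (a : ℕ → Fin 2) :
    EuclideanSpace ℝ (Fin n) :=
  WithLp.toLp 2 fun i => twoDigitExpansion (x i) (y i) a

theorem twoWordPoint_mem_Lambda {C : Set (Fin n → Fin q)} {x y : Fin n → Fin q} (hx : x ∈ C)
    (hy : y ∈ C) (a : ℕ → Fin 2) : twoWordPoint x y a ∈ Lambda q n C := by
  refine ⟨fun j => ![x, y] (a j), fun j => ?_, fun i => ?_⟩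
  · show ![x, y] (a j) ∈ C
    generalize a j = k
    fin_cases k
    exacts [hx, hy]
  · simp only [twoWordPoint, twoDigitExpansion, Real.ofDigits, Real.ofDigitsTerm, div_eq_mul_inv]
    congr 1
    ext j
    generalize a j = k
    fin_cases k <;> rfl

theorem twoWordPoint_apply_of_eq {x y : Fin n → Fin q} {i : Fin n} (h : x i = y i)
    (a : ℕ → Fin 2) : twoWordPoint x y a i = Real.ofDigits fun _ => x i := by
  simp only [twoWordPoint, twoDigitExpansion, h]
  congr 1
  ext j
  generalize a j = k
  fin_cases k <;> rfl

theorem dimH_range_twoWordPoint_pos {x y : Fin n → Fin q} {i : Fin n}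
    (h : x i ≠ y i) : 0 < dimH (range (twoWordPoint x y)) := by
  have hproj : EuclideanSpace.proj (𝕜 := ℝ) i '' range (twoWordPoint x y) =
      range (twoDigitExpansion (x i) (y i)) := by
    rw [← range_comp]
    rfl
  exact (dimH_range_twoDigitExpansion_pos h).trans_le
    (hproj ▸ (EuclideanSpace.proj (𝕜 := ℝ) i).lipschitz.dimH_image_le _)

end CodeFractal

theorem stmt16_general (q n : ℕ)
    (C : Set (Fin n → Fin q)) (hC : 2 ≤ C.ncard)
    (d : ℕ) (hd : d = sInf {k | ∃ x ∈ C, ∃ y ∈ C, x ≠ y ∧ hammingDist x y = k}) :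
    ∃ S : Finset (Fin n), S.card = n - d ∧
      ∃ t : S → ℝ, 0 < dimH (Lambda q n C ∩ {x | ∀ i : S, x i = t i}) := by
  obtain ⟨x, hx, y, hy, hxy, hdist⟩ := exists_hammingDist_eq_sInf hC
  obtain ⟨i₀, hi₀⟩ := Function.ne_iff.1 hxy
  refine ⟨Finset.univ.filter fun i => x i = y i, ?_, fun i => Real.ofDigits fun _ => x i, ?_⟩
  · rw [card_filter_eq_eq_card_sub_hammingDist, Fintype.card_fin, hdist, hd]
  refine (dimH_range_twoWordPoint_pos hi₀).trans_le (dimH_mono ?_)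
  rintro _ ⟨a, rfl⟩
  exact ⟨twoWordPoint_mem_Lambda hx hy a,
    fun j => twoWordPoint_apply_of_eq (Finset.mem_filter.1 j.2).2 a⟩

theorem stmt16 (q n : ℕ) (hq : 2 ≤ q) (hn : 1 ≤ n)
    (C : Set (Fin n → Fin q)) (hC : 2 ≤ C.ncard)
    (d : ℕ) (hd : d = sInf {k | ∃ x ∈ C, ∃ y ∈ C, x ≠ y ∧ hammingDist x y = k}) :
    ∃ S : Finset (Fin n), S.card = n - d ∧
      ∃ t : S → ℝ, 0 < dimH (Lambda q n C ∩ {x | ∀ i : S, x i = t i}) :=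
  stmt16_general q n C hC d hd
end
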